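/- Let d, t ≥ 1 and let μ be the unitarily invariant (uniform) Borel probability measure on the unit sphere of ℂ^d. Then ∫ (|ψ⟩⟨ψ|)^{⊗t} dμ(ψ) = P_[t]/C(d+t−1, t). -/

import Mathlib

/-!
Entry `(x, y)` of `∫ (|ψ⟩⟨ψ|)^{⊗t} dμ` is the moment `∫ ψ^m ψ̄^m' dμ`, where `m l`, `m' l` count
the occurrences of `l` in `x`, `y`; entry `(x, y)` of `P_[t]` is `#{σ | x ∘ σ = y} / t!`, which is
`∏ l, (m l)! / t!` if `m = m'` and `0` otherwise.

Invariance under a diagonal phase `ψ_j ↦ z ψ_j` kills the moments with `m ≠ m'`. For the moments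
`E n = ∫ ∏ |ψ_l|^(2 n_l)`, invariance under real rotations in a coordinate plane `(j, k)`, followed
by a comparison of coefficients in `c², s²`, gives
`(p + q)! E(.., p, q, ..) = p! q! E(.., p + q, 0, ..)`, hence
`(n_j + 1) E (n + e_k) = (n_k + 1) E (n + e_j)`. With `∑_j E (n + e_j) = E n` (from `∑ |ψ_j|² = 1`)
this gives `(|n| + d) E (n + e_j) = (n_j + 1) E n`, so by induction
`E n = ∏ (n l)! / (d (d + 1) ⋯ (d + |n| - 1))`, and `d (d + 1) ⋯ (d + t - 1) = t! C(d + t - 1, t)`.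
-/

open scoped BigOperators

noncomputable section

/-- `t`-fold tensor (Kronecker) power of a matrix, acting on `(ℂ^α)^{⊗t}`. -/
def tpow {α : Type*} [Fintype α] (M : Matrix α α ℂ) (t : ℕ) :
    Matrix (Fin t → α) (Fin t → α) ℂ :=
  Matrix.of fun x y => ∏ i, M (x i) (y i)

/-- The rank-one operator `|ψ⟩⟨ψ|`. -/
def rankOne {α : Type*} (ψ : α → ℂ) : Matrix α α ℂ :=
  Matrix.of fun i j => ψ i * (starRingEnd ℂ) (ψ j)

/-- The operator `U_σ` permuting the `t` tensor factors of `(ℂ^α)^{⊗t}`. -/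
def permOp (α : Type*) [DecidableEq α] {t : ℕ} (σ : Equiv.Perm (Fin t)) :
    Matrix (Fin t → α) (Fin t → α) ℂ :=
  Matrix.of fun x y => if (fun k => x (σ k)) = y then 1 else 0

/-- The projector `P_[t]` onto the symmetric subspace `Sym_t(ℂ^α)`. -/
def symProj (α : Type*) [DecidableEq α] (t : ℕ) :
    Matrix (Fin t → α) (Fin t → α) ℂ :=
  (t.factorial : ℂ)⁻¹ • ∑ σ : Equiv.Perm (Fin t), permOp α σ

open MeasureTheory Matrix Finset ComplexConjugate
open scoped Nat

section MixedMonomial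

variable {ι : Type*} [Fintype ι]

def mixedMonomial (m m' : ι → ℕ) (ψ : ι → ℂ) : ℂ :=
  ∏ l, ψ l ^ m l * conj (ψ l) ^ m' l

lemma continuous_mixedMonomial (m m' : ι → ℕ) : Continuous (mixedMonomial m m') := by
  unfold mixedMonomial
  fun_prop

lemma mixedMonomial_add (m m' n n' : ι → ℕ) (ψ : ι → ℂ) :
    mixedMonomial (m + n) (m' + n') ψ = mixedMonomial m m' ψ * mixedMonomial n n' ψ := by
  simp only [mixedMonomial, ← prod_mul_distrib, Pi.add_apply, pow_add]
  exact prod_congr rfl fun _ _ => by ring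

lemma mixedMonomial_mul (m m' : ι → ℕ) (χ ψ : ι → ℂ) :
    mixedMonomial m m' (χ * ψ) = mixedMonomial m m' χ * mixedMonomial m m' ψ := by
  simp only [mixedMonomial, ← prod_mul_distrib, Pi.mul_apply, map_mul, mul_pow]
  exact prod_congr rfl fun _ _ => by ring

lemma mixedMonomial_congr {m m' : ι → ℕ} {χ ψ : ι → ℂ}
    (h : ∀ l, χ l ≠ ψ l → m l = 0 ∧ m' l = 0) :
    mixedMonomial m m' χ = mixedMonomial m m' ψ := by
  refine prod_congr rfl fun l _ => ?_
  by_cases hl : χ l = ψ l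
  · rw [hl]
  · simp [h l hl]

variable [DecidableEq ι]

lemma mixedMonomial_single (j : ι) (p q : ℕ) (ψ : ι → ℂ) :
    mixedMonomial (Pi.single j p) (Pi.single j q) ψ = ψ j ^ p * conj (ψ j) ^ q := by
  rw [mixedMonomial, prod_eq_single j (fun l _ hl => by simp [hl]) (by simp)]
  simp

lemma mixedMonomial_mulSingle (m m' : ι → ℕ) (j : ι) (z : ℂ) :
    mixedMonomial m m' (Pi.mulSingle j z) = z ^ m j * conj z ^ m' j := by
  rw [mixedMonomial, prod_eq_single j (fun l _ hl => by simp [hl]) (by simp)]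
  simp

end MixedMonomial

section Sphere

variable {ι : Type*} [Fintype ι]

lemma norm_le_one_of_sum_normSq_eq_one {ψ : ι → ℂ} (hψ : ∑ i, Complex.normSq (ψ i) = 1)
    (l : ι) : ‖ψ l‖ ≤ 1 := by
  have : Complex.normSq (ψ l) ≤ 1 :=
    hψ ▸ single_le_sum (fun i _ => Complex.normSq_nonneg (ψ i)) (mem_univ l)
  rw [Complex.normSq_eq_norm_sq] at this
  nlinarith [norm_nonneg (ψ l)]

lemma norm_mixedMonomial_le_one {ψ : ι → ℂ} (hψ : ∑ i, Complex.normSq (ψ i) = 1)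
    (m m' : ι → ℕ) : ‖mixedMonomial m m' ψ‖ ≤ 1 := by
  rw [mixedMonomial, norm_prod]
  refine prod_le_one (fun _ _ => norm_nonneg _) fun l _ => ?_
  rw [norm_mul, norm_pow, norm_pow, Complex.norm_conj]
  have hl := norm_le_one_of_sum_normSq_eq_one hψ l
  exact mul_le_one₀ (pow_le_one₀ (norm_nonneg _) hl) (by positivity)
    (pow_le_one₀ (norm_nonneg _) hl)

lemma integrable_mixedMonomial {μ : Measure (ι → ℂ)} [IsFiniteMeasure μ]
    (hsphere : ∀ᵐ ψ ∂μ, ∑ i, Complex.normSq (ψ i) = 1) (m m' : ι → ℕ) :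
    Integrable (mixedMonomial m m') μ :=
  (integrable_const (1 : ℝ)).mono' (continuous_mixedMonomial m m').aestronglyMeasurable
    (hsphere.mono fun _ hψ => norm_mixedMonomial_le_one hψ m m')

end Sphere

section Invariance

variable {ι : Type*} [Fintype ι] [DecidableEq ι]

def IsUnitarilyInvariant (μ : Measure (ι → ℂ)) : Prop :=
  ∀ U ∈ unitaryGroup ι ℂ, μ.map (fun ψ => U *ᵥ ψ) = μ

variable {μ : Measure (ι → ℂ)}

lemma IsUnitarilyInvariant.integral_comp_mulVec (hμ : IsUnitarilyInvariant μ)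
    {U : Matrix ι ι ℂ} (hU : U ∈ unitaryGroup ι ℂ) {f : (ι → ℂ) → ℂ} (hf : Continuous f) :
    ∫ ψ, f (U *ᵥ ψ) ∂μ = ∫ ψ, f ψ ∂μ := by
  have hU' : Continuous fun ψ : ι → ℂ => U *ᵥ ψ := continuous_const.matrix_mulVec continuous_id
  rw [← integral_map hU'.aemeasurable (hμ U hU ▸ hf.aestronglyMeasurable), hμ U hU]

lemma diagonal_mem_unitaryGroup {v : ι → ℂ} (hv : ∀ l, ‖v l‖ = 1) :
    diagonal v ∈ unitaryGroup ι ℂ := by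
  rw [mem_unitaryGroup_iff', star_eq_conjTranspose, diagonal_conjTranspose, diagonal_mul_diagonal]
  convert diagonal_one with l
  simp [Complex.conj_mul', hv]

lemma exists_norm_eq_one_pow_mul_conj_pow_ne_one {a b : ℕ} (hab : a ≠ b) :
    ∃ z : ℂ, ‖z‖ = 1 ∧ z ^ a * conj z ^ b ≠ 1 := by
  have hab' : (a : ℝ) - b ≠ 0 := sub_ne_zero.2 (by exact_mod_cast hab)
  refine ⟨Complex.exp ((Real.pi / (a - b) : ℝ) * Complex.I), Complex.norm_exp_ofReal_mul_I _, ?_⟩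
  -- with `θ = π / (a - b)`: `z ^ a * conj z ^ b = exp ((a - b) θ i) = exp (π i) = -1`
  have harg : (a : ℂ) * ((Real.pi / (a - b) : ℝ) * Complex.I)
      + b * conj ((Real.pi / (a - b) : ℝ) * Complex.I) = Real.pi * Complex.I := by
    simp only [map_mul, Complex.conj_ofReal, Complex.conj_I]
    push_cast
    field_simp [show (a : ℂ) - b ≠ 0 by exact_mod_cast hab']
    ring
  rw [← Complex.exp_conj, ← Complex.exp_nat_mul, ← Complex.exp_nat_mul, ← Complex.exp_add, harg,
    Complex.exp_pi_mul_I]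
  norm_num

lemma IsUnitarilyInvariant.integral_mixedMonomial_eq_zero (hμ : IsUnitarilyInvariant μ)
    {m m' : ι → ℕ} (hmm' : m ≠ m') : ∫ ψ, mixedMonomial m m' ψ ∂μ = 0 := by
  obtain ⟨j, hj⟩ := Function.ne_iff.1 hmm'
  obtain ⟨z, hz, hz1⟩ := exists_norm_eq_one_pow_mul_conj_pow_ne_one hj
  have hU : diagonal (Pi.mulSingle j z) ∈ unitaryGroup ι ℂ :=
    diagonal_mem_unitaryGroup fun l => by
      rcases eq_or_ne l j with rfl | hl <;> simp [*]
  have h := hμ.integral_comp_mulVec hU (continuous_mixedMonomial m m')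
  simp only [show ∀ ψ, diagonal (Pi.mulSingle j z) *ᵥ ψ = Pi.mulSingle j z * ψ from
      fun ψ => funext (mulVec_diagonal _ ψ), mixedMonomial_mul, mixedMonomial_mulSingle,
    integral_const_mul] at h
  by_contra hne
  exact hz1 ((mul_eq_right₀ hne).1 h)

end Invariance

lemma eq_zero_of_forall_sum_pow_mul_pow_eq_zero {m : ℕ} {a : ℕ → ℂ}
    (h : ∀ x y : ℝ, 0 ≤ x → 0 ≤ y → x + y = 1 →
      ∑ p ∈ range (m + 1), (x : ℂ) ^ p * (y : ℂ) ^ (m - p) * a p = 0)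
    {p : ℕ} (hp : p ≤ m) : a p = 0 := by
  set P : Polynomial ℂ := ∑ q ∈ range (m + 1), Polynomial.C (a q) * Polynomial.X ^ q
  -- dehomogenize: `(x, y) = (u, 1) / (u + 1)` for `u ≥ 0`
  have hroot : ∀ u : ℝ, 0 ≤ u → P.eval (u : ℂ) = 0 := by
    intro u hu
    have hu1 : (u : ℂ) + 1 ≠ 0 := by exact_mod_cast (by positivity : u + 1 ≠ 0)
    have := h (u / (u + 1)) (1 / (u + 1)) (by positivity) (by positivity) (by field_simp)
    simp only [P, Polynomial.eval_finsetSum, Polynomial.eval_mul, Polynomial.eval_C,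
      Polynomial.eval_pow, Polynomial.eval_X]
    rw [← mul_eq_zero_iff_left (pow_ne_zero m (inv_ne_zero hu1)), mul_sum, ← this]
    refine sum_congr rfl fun q hq => ?_
    have hqm : q ≤ m := Nat.lt_succ_iff.1 (mem_range.1 hq)
    push_cast
    rw [div_pow, div_pow, one_pow, div_mul_div_comm, ← pow_add, Nat.add_sub_cancel' hqm, inv_pow]
    field_simp
  have hP : P = 0 := Polynomial.eq_zero_of_infinite_isRoot P <|
    ((Set.Ici_infinite (0 : ℝ)).image Complex.ofReal_injective.injOn).mono
      (by rintro _ ⟨u, hu, rfl⟩; exact hroot u hu)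
  have := congrArg (Polynomial.coeff · p) hP
  simpa [P, Polynomial.finsetSum_coeff, Polynomial.coeff_C_mul_X_pow, Nat.lt_succ_iff, hp]
    using this

section Rotation

variable {ι : Type*} [Fintype ι] [DecidableEq ι]

-- `[[c, s], [-s, c]]` on the coordinates `j, k`, the identity on the others
def planeRotation (j k : ι) (c s : ℝ) : Matrix ι ι ℂ :=
  1 + ((c : ℂ) - 1) • (single j j 1 + single k k 1) + (s : ℂ) • (single j k 1 - single k j 1)

lemma planeRotation_mem_unitaryGroup {j k : ι} (hjk : j ≠ k) {c s : ℝ} (hcs : c ^ 2 + s ^ 2 = 1) :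
    planeRotation j k c s ∈ unitaryGroup ι ℂ := by
  have hcs' : (c : ℂ) ^ 2 + (s : ℂ) ^ 2 = 1 := by exact_mod_cast hcs
  rw [mem_unitaryGroup_iff', star_eq_conjTranspose, planeRotation]
  simp only [conjTranspose_add, conjTranspose_smul, conjTranspose_sub, conjTranspose_one,
    conjTranspose_single, star_one, Complex.star_def, map_sub, Complex.conj_ofReal, map_one]
  simp only [add_mul, mul_add, sub_mul, mul_sub, mul_smul_comm, smul_mul_assoc, one_mul, mul_one,
    single_mul_single_same, single_mul_single_of_ne _ _ _ _ hjk.symm,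
    single_mul_single_of_ne _ _ _ _ hjk, zero_add, add_zero, sub_zero, zero_sub]
  linear_combination (norm := module) hcs' • (single j j (1 : ℂ) + single k k 1)

lemma planeRotation_mulVec_apply (j k : ι) (c s : ℝ) (ψ : ι → ℂ) (l : ι) :
    (planeRotation j k c s *ᵥ ψ) l = ψ l + (if l = j then (c - 1) * ψ j + s * ψ k else 0)
      + (if l = k then (c - 1) * ψ k - s * ψ j else 0) := by
  simp only [planeRotation, add_mulVec, sub_mulVec, smul_mulVec, one_mulVec, single_mulVec_eq,
    Pi.add_apply, Pi.smul_apply, Pi.sub_apply, Pi.single_apply, smul_eq_mul]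
  split_ifs <;> ring

lemma mixedMonomial_planeRotation_mulVec {j k : ι} (hjk : j ≠ k) {n : ι → ℕ} (hj : n j = 0)
    (hk : n k = 0) (c s : ℝ) (m : ℕ) (ψ : ι → ℂ) :
    mixedMonomial (n + Pi.single j m) (n + Pi.single j m) (planeRotation j k c s *ᵥ ψ) =
      ∑ p ∈ range (m + 1), ∑ q ∈ range (m + 1),
        (c : ℂ) ^ (p + q) * (s : ℂ) ^ (m - p + (m - q)) * (m.choose p * m.choose q) *
          mixedMonomial (n + Pi.single j p + Pi.single k (m - p))
            (n + Pi.single j q + Pi.single k (m - q)) ψ := by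
  have hrest : mixedMonomial n n (planeRotation j k c s *ᵥ ψ) = mixedMonomial n n ψ :=
    mixedMonomial_congr fun l hl => by
      by_cases hlj : l = j
      · exact hlj ▸ ⟨hj, hj⟩
      by_cases hlk : l = k
      · exact hlk ▸ ⟨hk, hk⟩
      simp [planeRotation_mulVec_apply, hlj, hlk] at hl
  have hRj : (planeRotation j k c s *ᵥ ψ) j = c * ψ j + s * ψ k := by
    simp [planeRotation_mulVec_apply, hjk]
    ring
  simp only [mixedMonomial_add, mixedMonomial_single, hrest, hRj, map_add, map_mul,
    Complex.conj_ofReal]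
  rw [add_pow, add_pow, sum_mul_sum, mul_sum]
  refine sum_congr rfl fun p _ => ?_
  rw [mul_sum]
  refine sum_congr rfl fun q _ => ?_
  ring

variable {μ : Measure (ι → ℂ)} [IsFiniteMeasure μ]

lemma IsUnitarilyInvariant.sum_choose_sq_mul_integral_mixedMonomial (hμ : IsUnitarilyInvariant μ)
    (hsphere : ∀ᵐ ψ ∂μ, ∑ i, Complex.normSq (ψ i) = 1) {j k : ι} (hjk : j ≠ k) {n : ι → ℕ}
    (hj : n j = 0) (hk : n k = 0) (m : ℕ) {c s : ℝ} (hcs : c ^ 2 + s ^ 2 = 1) :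
    ∑ p ∈ range (m + 1), ((c ^ 2 : ℝ) : ℂ) ^ p * ((s ^ 2 : ℝ) : ℂ) ^ (m - p) *
        (m.choose p ^ 2 * ∫ ψ, mixedMonomial (n + Pi.single j p + Pi.single k (m - p))
          (n + Pi.single j p + Pi.single k (m - p)) ψ ∂μ) =
      ∫ ψ, mixedMonomial (n + Pi.single j m) (n + Pi.single j m) ψ ∂μ := by
  rw [← hμ.integral_comp_mulVec (planeRotation_mem_unitaryGroup hjk hcs)
    (continuous_mixedMonomial _ _)]
  simp only [mixedMonomial_planeRotation_mulVec hjk hj hk]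
  rw [integral_finsetSum _ fun p _ => integrable_finsetSum _ fun q _ =>
    (integrable_mixedMonomial hsphere _ _).const_mul _]
  refine sum_congr rfl fun p _ => ?_
  rw [integral_finsetSum _ fun q _ => (integrable_mixedMonomial hsphere _ _).const_mul _,
    sum_eq_single p ?_ (by simp_all)]
  · rw [integral_const_mul]
    push_cast
    ring
  · intro q _ hqp
    rw [integral_const_mul, hμ.integral_mixedMonomial_eq_zero, mul_zero]
    intro h
    have := congrFun h j
    simp [hj, hjk.symm] at this
    exact hqp this.symm

lemma IsUnitarilyInvariant.choose_mul_integral_mixedMonomial (hμ : IsUnitarilyInvariant μ)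
    (hsphere : ∀ᵐ ψ ∂μ, ∑ i, Complex.normSq (ψ i) = 1) {j k : ι} (hjk : j ≠ k) {n : ι → ℕ}
    (hj : n j = 0) (hk : n k = 0) {p m : ℕ} (hpm : p ≤ m) :
    m.choose p * ∫ ψ, mixedMonomial (n + Pi.single j p + Pi.single k (m - p))
        (n + Pi.single j p + Pi.single k (m - p)) ψ ∂μ =
      ∫ ψ, mixedMonomial (n + Pi.single j m) (n + Pi.single j m) ψ ∂μ := by
  set E := fun p => ∫ ψ, mixedMonomial (n + Pi.single j p + Pi.single k (m - p))
        (n + Pi.single j p + Pi.single k (m - p)) ψ ∂μ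
  set Em := ∫ ψ, mixedMonomial (n + Pi.single j m) (n + Pi.single j m) ψ ∂μ
  -- compare the rotated moment with `Em = Em * (c² + s²) ^ m`, coefficientwise in `c², s²`
  have hcoeff := eq_zero_of_forall_sum_pow_mul_pow_eq_zero
    (a := fun p => m.choose p * (m.choose p * E p - Em)) (m := m) ?_ hpm
  · have hchoose : (m.choose p : ℂ) ≠ 0 := by exact_mod_cast (Nat.choose_pos hpm).ne'
    exact sub_eq_zero.1 ((mul_eq_zero.1 hcoeff).resolve_left hchoose)
  intro x y hx hy hxy
  have hsum := hμ.sum_choose_sq_mul_integral_mixedMonomial hsphere hjk hj hk m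
    (c := √x) (s := √y) (by rw [Real.sq_sqrt hx, Real.sq_sqrt hy, hxy])
  rw [Real.sq_sqrt hx, Real.sq_sqrt hy] at hsum
  have hbinom : ∑ p ∈ range (m + 1), (x : ℂ) ^ p * (y : ℂ) ^ (m - p) * m.choose p = 1 := by
    rw [← add_pow, ← Complex.ofReal_add, hxy, Complex.ofReal_one, one_pow]
  calc _ = ∑ p ∈ range (m + 1), (x : ℂ) ^ p * (y : ℂ) ^ (m - p) * (m.choose p ^ 2 * E p)
        - (∑ p ∈ range (m + 1), (x : ℂ) ^ p * (y : ℂ) ^ (m - p) * m.choose p) * Em := by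
          rw [sum_mul, ← sum_sub_distrib]
          exact sum_congr rfl fun _ _ => by ring
    _ = 0 := by rw [hsum, hbinom, one_mul, sub_self]

end Rotation

section Moments

variable {ι : Type*} [Fintype ι] [DecidableEq ι] {μ : Measure (ι → ℂ)}

lemma sum_integral_mixedMonomial_add_single [IsFiniteMeasure μ]
    (hsphere : ∀ᵐ ψ ∂μ, ∑ i, Complex.normSq (ψ i) = 1) (n : ι → ℕ) :
    ∑ j, ∫ ψ, mixedMonomial (n + Pi.single j 1) (n + Pi.single j 1) ψ ∂μ =
      ∫ ψ, mixedMonomial n n ψ ∂μ := by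
  rw [← integral_finsetSum _ fun j _ => integrable_mixedMonomial hsphere _ _]
  refine integral_congr_ae (hsphere.mono fun ψ hψ => ?_)
  have hnorm : ∑ j, ψ j * conj (ψ j) = 1 := by
    simp only [Complex.mul_conj, ← Complex.ofReal_sum, hψ, Complex.ofReal_one]
  simp only [mixedMonomial_add, mixedMonomial_single, pow_one, ← mul_sum, hnorm, mul_one]

lemma IsUnitarilyInvariant.factorial_mul_integral_mixedMonomial [IsFiniteMeasure μ]
    (hμ : IsUnitarilyInvariant μ) (hsphere : ∀ᵐ ψ ∂μ, ∑ i, Complex.normSq (ψ i) = 1) {j k : ι}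
    (hjk : j ≠ k) {n : ι → ℕ} (hj : n j = 0) (hk : n k = 0) (p q : ℕ) :
    (p + q)! * ∫ ψ, mixedMonomial (n + Pi.single j p + Pi.single k q)
        (n + Pi.single j p + Pi.single k q) ψ ∂μ =
      p ! * q ! * ∫ ψ, mixedMonomial (n + Pi.single j (p + q)) (n + Pi.single j (p + q)) ψ ∂μ := by
  have h := hμ.choose_mul_integral_mixedMonomial hsphere hjk hj hk (Nat.le_add_right p q)
  rw [Nat.add_sub_cancel_left] at h
  rw [← h, ← Nat.choose_mul_factorial_mul_factorial (Nat.le_add_right p q), Nat.add_sub_cancel_left]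
  push_cast
  ring

lemma IsUnitarilyInvariant.add_one_mul_integral_mixedMonomial_add_single [IsFiniteMeasure μ]
    (hμ : IsUnitarilyInvariant μ) (hsphere : ∀ᵐ ψ ∂μ, ∑ i, Complex.normSq (ψ i) = 1)
    (n : ι → ℕ) (j k : ι) :
    (n j + 1) * ∫ ψ, mixedMonomial (n + Pi.single k 1) (n + Pi.single k 1) ψ ∂μ =
      (n k + 1) * ∫ ψ, mixedMonomial (n + Pi.single j 1) (n + Pi.single j 1) ψ ∂μ := by
  rcases eq_or_ne j k with rfl | hjk
  · rfl
  set n₀ := Function.update (Function.update n j 0) k 0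
  have hj : n₀ j = 0 := by simp [n₀, hjk]
  have hk : n₀ k = 0 := by simp [n₀]
  have e₁ : n + Pi.single k 1 = n₀ + Pi.single j (n j) + Pi.single k (n k + 1) := by
    ext l
    by_cases hlj : l = j <;> by_cases hlk : l = k <;> simp_all [n₀]
  have e₂ : n + Pi.single j 1 = n₀ + Pi.single j (n j + 1) + Pi.single k (n k) := by
    ext l
    by_cases hlj : l = j <;> by_cases hlk : l = k <;> simp_all [n₀]
  have h₁ := hμ.factorial_mul_integral_mixedMonomial hsphere hjk hj hk (n j) (n k + 1)
  have h₂ := hμ.factorial_mul_integral_mixedMonomial hsphere hjk hj hk (n j + 1) (n k)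
  rw [← e₁, show n j + (n k + 1) = n j + 1 + n k by ring] at h₁
  rw [← e₂] at h₂
  rw [Nat.factorial_succ (n k)] at h₁
  rw [Nat.factorial_succ (n j)] at h₂
  push_cast at h₁ h₂
  refine mul_left_cancel₀ (Nat.cast_ne_zero.2 (n j + 1 + n k).factorial_ne_zero) ?_
  linear_combination (n j + 1 : ℂ) * h₁ - (n k + 1 : ℂ) * h₂

lemma IsUnitarilyInvariant.integral_mixedMonomial_add_single_mul [IsFiniteMeasure μ]
    (hμ : IsUnitarilyInvariant μ) (hsphere : ∀ᵐ ψ ∂μ, ∑ i, Complex.normSq (ψ i) = 1)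
    (n : ι → ℕ) (j : ι) :
    (∫ ψ, mixedMonomial (n + Pi.single j 1) (n + Pi.single j 1) ψ ∂μ) *
        ((∑ l, n l : ℕ) + Fintype.card ι) = (n j + 1) * ∫ ψ, mixedMonomial n n ψ ∂μ := by
  rw [← sum_integral_mixedMonomial_add_single hsphere n, mul_sum,
    sum_congr rfl fun k _ => hμ.add_one_mul_integral_mixedMonomial_add_single hsphere n j k,
    ← sum_mul, mul_comm]
  simp [sum_add_distrib]

lemma IsUnitarilyInvariant.integral_mixedMonomial_self_mul_ascFactorial [IsProbabilityMeasure μ]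
    (hμ : IsUnitarilyInvariant μ) (hsphere : ∀ᵐ ψ ∂μ, ∑ i, Complex.normSq (ψ i) = 1)
    (n : ι → ℕ) :
    (∫ ψ, mixedMonomial n n ψ ∂μ) * (Fintype.card ι).ascFactorial (∑ l, n l) =
      ∏ l, ((n l)! : ℂ) := by
  induction h : ∑ l, n l generalizing n with
  | zero =>
    obtain rfl : n = 0 := funext fun l => (sum_eq_zero_iff.1 h) l (mem_univ l)
    simp [mixedMonomial]
  | succ t ih =>
    obtain ⟨j, hj⟩ : ∃ j, n j ≠ 0 := not_forall.1 fun h0 => by simp [h0] at h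
    set m := Function.update n j (n j - 1)
    have hn : n = m + Pi.single j 1 := by
      ext l
      by_cases hl : l = j <;> simp_all [m]
      omega
    have hm : ∑ l, m l = t := by simpa [hn, sum_add_distrib] using h
    have hfac : ∏ l, ((n l)! : ℂ) = (m j + 1) * ∏ l, ((m l)! : ℂ) := by
      rw [← mul_prod_erase univ _ (mem_univ j), ← mul_prod_erase univ _ (mem_univ j),
        prod_congr rfl fun l hl => by
          rw [hn, Pi.add_apply, Pi.single_eq_of_ne (ne_of_mem_erase hl), add_zero]]
      simp [hn, Nat.factorial_succ, mul_assoc]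
    rw [hfac, ← ih m hm, Nat.ascFactorial_succ, hn, ← hm]
    have key := hμ.integral_mixedMonomial_add_single_mul hsphere m j
    push_cast at key ⊢
    linear_combination ((Fintype.card ι).ascFactorial (∑ l, m l) : ℂ) * key

lemma IsUnitarilyInvariant.integral_mixedMonomial [IsProbabilityMeasure μ]
    (hμ : IsUnitarilyInvariant μ) (hsphere : ∀ᵐ ψ ∂μ, ∑ i, Complex.normSq (ψ i) = 1)
    (m m' : ι → ℕ) :
    ∫ ψ, mixedMonomial m m' ψ ∂μ =
      if m = m' then (∏ l, ((m l)! : ℂ)) / (Fintype.card ι).ascFactorial (∑ l, m l) else 0 := by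
  split_ifs with h
  · subst h
    have key := hμ.integral_mixedMonomial_self_mul_ascFactorial hsphere m
    refine eq_div_of_mul_eq (fun h0 => ?_) key
    rw [h0, mul_zero] at key
    exact prod_ne_zero_iff.2 (fun l _ => Nat.cast_ne_zero.2 (m l).factorial_ne_zero) key.symm
  · exact hμ.integral_mixedMonomial_eq_zero h

end Moments

section Fibers

variable {α β : Type*} [Fintype α] [DecidableEq β]

def fiberCard (x : α → β) (b : β) : ℕ := Fintype.card {a // x a = b}

lemma fiberCard_comp_perm (x : α → β) (σ : Equiv.Perm α) : fiberCard (x ∘ σ) = fiberCard x :=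
  funext fun _ => Fintype.card_congr (σ.subtypeEquiv fun _ => Iff.rfl)

variable [Fintype β]

lemma prod_comp_eq_prod_pow_fiberCard {M : Type*} [CommMonoid M] (x : α → β) (f : β → M) :
    ∏ a, f (x a) = ∏ b, f b ^ fiberCard x b := by
  rw [← prod_fiberwise' univ x f]
  exact prod_congr rfl fun b _ => by rw [prod_const, fiberCard, Fintype.card_subtype]

lemma sum_fiberCard (x : α → β) : ∑ b, fiberCard x b = Fintype.card α := by
  simpa [fiberCard, Fintype.card_subtype] using (card_eq_sum_card_fiberwise (f := x) (s := univ)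
    (t := univ) fun _ _ => mem_univ _).symm

lemma card_perm_comp_eq [DecidableEq α] (x y : α → β) :
    Fintype.card {σ : Equiv.Perm α // x ∘ σ = y} =
      if fiberCard x = fiberCard y then ∏ b, (fiberCard x b)! else 0 := by
  split_ifs with h
  · -- the solutions of `x ∘ σ = y` form a coset of the stabilizer of `x`
    set σ₀ := Equiv.ofFiberEquiv fun b => Fintype.equivOfCardEq (congrFun h b).symm
    have hσ₀ : x ∘ σ₀ = y := funext (Equiv.ofFiberEquiv_map _)
    rw [← Fintype.card_congr (Equiv.subtypeEquiv (p := fun τ : Equiv.Perm α => x ∘ τ = x)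
      (Equiv.mulRight σ₀) fun τ => ?_),
      DomMulAct.stabilizer_card]
    · rfl
    rw [← hσ₀, Equiv.coe_mulRight, Equiv.Perm.coe_mul, ← Function.comp_assoc]
    exact σ₀.surjective.injective_comp_right.eq_iff.symm
  · exact Fintype.card_eq_zero_iff.2 ⟨fun ⟨σ, hσ⟩ => h (hσ ▸ fiberCard_comp_perm x σ).symm⟩

end Fibers

lemma tpow_rankOne_apply {α : Type*} [Fintype α] [DecidableEq α] (ψ : α → ℂ) {t : ℕ}
    (x y : Fin t → α) :
    tpow (rankOne ψ) t x y = mixedMonomial (fiberCard x) (fiberCard y) ψ := by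
  simp only [tpow, rankOne, Matrix.of_apply, mixedMonomial, prod_mul_distrib,
    prod_comp_eq_prod_pow_fiberCard x ψ, prod_comp_eq_prod_pow_fiberCard y fun b => conj (ψ b)]

lemma symProj_apply (α : Type*) [DecidableEq α] {t : ℕ} (x y : Fin t → α) :
    symProj α t x y = (t ! : ℂ)⁻¹ * Fintype.card {σ : Equiv.Perm (Fin t) // x ∘ σ = y} := by
  simp [symProj, permOp, Matrix.sum_apply, sum_boole, Fintype.card_subtype, Function.comp_def]

theorem stmt1 (d t : ℕ)
    (μ : Measure (Fin d → ℂ)) [IsProbabilityMeasure μ]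
    (hsphere : ∀ᵐ ψ ∂μ, ∑ i, Complex.normSq (ψ i) = 1)
    (hinv : ∀ U ∈ Matrix.unitaryGroup (Fin d) ℂ,
      Measure.map (fun ψ => Matrix.mulVec U ψ) μ = μ) :
    ∀ x y : Fin t → Fin d,
      (∫ ψ, tpow (rankOne ψ) t x y ∂μ)
        = (((d + t - 1).choose t : ℂ))⁻¹ * symProj (Fin d) t x y := by
  intro x y
  have hμ : IsUnitarilyInvariant μ := hinv
  simp_rw [tpow_rankOne_apply]
  rw [hμ.integral_mixedMonomial hsphere, symProj_apply, card_perm_comp_eq, sum_fiberCard,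
    Fintype.card_fin, Fintype.card_fin, Nat.ascFactorial_eq_factorial_mul_choose']
  split_ifs
  · push_cast
    rw [div_eq_mul_inv, mul_inv]
    ring
  · simp

end
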